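/- arXiv:2605.15586 — 2 statements merged into one kernel-verified Lean document; each statement's English description precedes it below -/
import Mathlib

section
/- There exist two 10×10 zero-diagonal row-stochastic transition matrices Q^Bias and Q^Ours, where Q^Ours is obtained from Q^Bias by zeroing out all but 4 entries per row and renormalizing, such that (with Y uniform on {1,...,10}) H^{Ours}(Y|Ȳ) > H^{Bias}(Y|Ȳ). That is, sparsifying a biased transition matrix does not always decrease the conditional entropy of the true label given the complementary label. -/
open Finset

/-- Conditional entropy `H(Y|Ȳ)` for `Y` uniform on `Fin C` and `Ȳ` generated by
the transition matrix `Q`, joint law `P(Y=i, Ȳ=j) = Q i j / C`. -/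
noncomputable def condEntUnif {C : ℕ} (Q : Fin C → Fin C → ℝ) : ℝ :=
  ∑ j, (∑ i, Q i j / C) *
    (∑ i, Real.negMulLog ((Q i j / C) / ∑ i', Q i' j / C))

/-- The biased transition matrix: mass 9/10 on the next label (cyclically),
1/80 on the remaining eight off-diagonal labels. -/
noncomputable def QBaux : Fin 10 → Fin 10 → ℝ := fun i j =>
  if j = i then 0 else if j = i + 1 then 9/10 else 1/80

/-- The sparsified matrix: keep the four small entries `i+2, i+3, i+4, i+5`. -/
noncomputable def QOaux : Fin 10 → Fin 10 → ℝ := fun i j =>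
  if j = i + 2 ∨ j = i + 3 ∨ j = i + 4 ∨ j = i + 5 then 1/4 else 0

lemma QB_col (j : Fin 10) : ∑ i, QBaux i j / 10 = 1/10 := by
  fin_cases j <;>
  · simp (config := { decide := true }) [QBaux, Fin.sum_univ_succ]
    norm_num

lemma QO_col (j : Fin 10) : ∑ i, QOaux i j / 10 = 1/10 := by
  fin_cases j <;>
  · simp (config := { decide := true }) [QOaux, Fin.sum_univ_succ]
    norm_num

lemma QB_inner (j : Fin 10) :
    ∑ i, Real.negMulLog ((QBaux i j / 10) / (1/10))
      = Real.negMulLog (9/10) + 8 * Real.negMulLog (1/80) := by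
  fin_cases j <;>
  · simp (config := { decide := true }) [QBaux, Fin.sum_univ_succ]
    norm_num [Real.negMulLog_zero]
    ring

lemma QO_inner (j : Fin 10) :
    ∑ i, Real.negMulLog ((QOaux i j / 10) / (1/10))
      = 4 * Real.negMulLog (1/4) := by
  fin_cases j <;>
  · simp (config := { decide := true }) [QOaux, Fin.sum_univ_succ]
    norm_num [Real.negMulLog_zero]
    ring

lemma condEnt_QB : condEntUnif QBaux
    = Real.negMulLog (9/10) + 8 * Real.negMulLog (1/80) := by
  unfold condEntUnif
  have hc : ((10:ℕ):ℝ) = 10 := by norm_num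
  calc (∑ j, (∑ i, QBaux i j / ((10:ℕ):ℝ)) *
        (∑ i, Real.negMulLog ((QBaux i j / ((10:ℕ):ℝ)) / ∑ i', QBaux i' j / ((10:ℕ):ℝ))))
      = ∑ j : Fin 10, (1/10 : ℝ) *
          (Real.negMulLog (9/10) + 8 * Real.negMulLog (1/80)) := by
        refine Finset.sum_congr rfl fun j _ => ?_
        rw [hc, QB_col j, QB_inner j]
    _ = _ := by
        rw [Finset.sum_const, Finset.card_univ]
        simp

lemma condEnt_QO : condEntUnif QOaux = 4 * Real.negMulLog (1/4) := by
  unfold condEntUnif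
  have hc : ((10:ℕ):ℝ) = 10 := by norm_num
  calc (∑ j, (∑ i, QOaux i j / ((10:ℕ):ℝ)) *
        (∑ i, Real.negMulLog ((QOaux i j / ((10:ℕ):ℝ)) / ∑ i', QOaux i' j / ((10:ℕ):ℝ))))
      = ∑ j : Fin 10, (1/10 : ℝ) * (4 * Real.negMulLog (1/4)) := by
        refine Finset.sum_congr rfl fun j _ => ?_
        rw [hc, QO_col j, QO_inner j]
    _ = _ := by
        rw [Finset.sum_const, Finset.card_univ]
        simp

lemma key_ineq : Real.negMulLog (9/10) + 8 * Real.negMulLog (1/80)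
    < 4 * Real.negMulLog (1/4) := by
  have e1 : Real.log (9/10 : ℝ) = - Real.log (10/9) := by
    rw [← Real.log_inv]; norm_num
  have e2 : Real.log (1/80 : ℝ) = - Real.log 80 := by
    rw [← Real.log_inv]; norm_num
  have e3 : Real.log (1/4 : ℝ) = - Real.log 4 := by
    rw [← Real.log_inv]; norm_num
  have hA : Real.log (10/9 : ℝ) ≤ 1/9 := by
    have := Real.log_le_sub_one_of_pos (show (0:ℝ) < 10/9 by norm_num)
    linarith
  have hB : Real.log (80 : ℝ) ≤ 5 := by
    rw [Real.log_le_iff_le_exp (by norm_num)]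
    have h1 : (2.7182818283 : ℝ) ^ (5:ℕ) ≤ Real.exp 1 ^ (5:ℕ) := by
      gcongr
      exact le_of_lt Real.exp_one_gt_d9
    have h2 : Real.exp 1 ^ (5:ℕ) = Real.exp ((5:ℕ):ℝ) := Real.exp_one_pow 5
    have : (80 : ℝ) ≤ (2.7182818283 : ℝ) ^ (5:ℕ) := by norm_num
    calc (80:ℝ) ≤ (2.7182818283 : ℝ) ^ (5:ℕ) := this
      _ ≤ Real.exp 1 ^ (5:ℕ) := h1
      _ = Real.exp 5 := by rw [h2]; norm_num
  have hC : (1:ℝ) ≤ Real.log 4 := by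
    rw [Real.le_log_iff_exp_le (by norm_num)]
    have := Real.exp_one_lt_d9
    linarith
  simp only [Real.negMulLog, e1, e2, e3]
  nlinarith [hA, hB, hC]

lemma sumS (i : Fin 10) :
    ∑ k ∈ ({i+2, i+3, i+4, i+5} : Finset (Fin 10)), QBaux i k = 1/20 := by
  fin_cases i <;>
  · simp (config := { decide := true }) [QBaux, Finset.sum_insert, Finset.mem_insert]
    norm_num

/-- Sparsifying a biased transition matrix need not decrease the conditional
entropy: there exist 10×10 zero-diagonal row-stochastic matrices `Qb` and `Qo`,
with `Qo` obtained from `Qb` by keeping 4 entries per row and renormalizing,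
such that (for `Y` uniform) `H^{Ours}(Y|Ȳ) > H^{Bias}(Y|Ȳ)`. -/
theorem sparsification_can_increase_condEntropy :
    ∃ Qb Qo : Fin 10 → Fin 10 → ℝ,
      (∀ i j, 0 ≤ Qb i j) ∧ (∀ i, ∑ j, Qb i j = 1) ∧ (∀ i, Qb i i = 0) ∧
      (∀ i j, 0 ≤ Qo i j) ∧ (∀ i, ∑ j, Qo i j = 1) ∧ (∀ i, Qo i i = 0) ∧
      (∀ i, ∃ s : Finset (Fin 10), s.card = 4 ∧
        (∀ j, Qo i j = if j ∈ s then Qb i j / (∑ k ∈ s, Qb i k) else 0)) ∧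
      condEntUnif Qb < condEntUnif Qo := by
  refine ⟨QBaux, QOaux, ?_, ?_, ?_, ?_, ?_, ?_, ?_, ?_⟩
  · intro i j; unfold QBaux; split_ifs <;> norm_num
  · intro i; fin_cases i <;>
    · simp (config := { decide := true }) [QBaux, Fin.sum_univ_succ]
      norm_num
  · intro i; simp [QBaux]
  · intro i j; unfold QOaux; split_ifs <;> norm_num
  · intro i; fin_cases i <;>
    · simp (config := { decide := true }) [QOaux, Fin.sum_univ_succ]
      norm_num
  · intro i; simp (config := { decide := true }) [QOaux]
  · intro i
    refine ⟨({i+2, i+3, i+4, i+5} : Finset (Fin 10)), ?_, ?_⟩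
    · fin_cases i <;> decide
    · intro j
      rw [sumS i]
      fin_cases i <;> fin_cases j <;>
        · simp (config := { decide := true }) [QBaux, QOaux]
          try norm_num
  · rw [condEnt_QB, condEnt_QO]; exact key_ineq
end

section
/- Under the uniform complementary-label assumption, for the one-versus-all style loss, the ordinary classification risk can be written as R(g) = (C-1)·E_{p(x,ȳ)}[ L̄(g(x), ȳ) ] + M for a constant M independent of g, where L̄(g(x), ȳ) is defined from the ordinary loss by L̄(g(x), ȳ) = -L(g(x), ȳ) up to additive constants. Formally: if for each x, Σ_{y=1}^C L(g(x), y) = K is a constant independent of g and x, then E_{p(x,y)}[L(g(x),y)] = K - (C-1) E_{p(x,ȳ)}[L(g(x), ȳ)], where p(ȳ|y) is uniform over {1,...,C}\{y}. -/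
/-!
Complementary labels are uniform on the `C - 1` wrong classes, so the complementary risk of
the loss at `x` is `1 / (C - 1)` times the expected loss over all labels except the true one.
By the symmetric condition that sum is `K - L x y`, hence the complementary risk equals
`(K - R) / (C - 1)` with `R` the ordinary risk, and solving for `R` gives the identity.
-/

open Finset

section ComplementaryLabels

variable {ι R : Type*} [Fintype ι] [DecidableEq ι] [CommRing R]

theorem sum_ite_eq_zero_mul (a : R) (ℓ : ι → R) (y : ι) :
    ∑ ybar, (if ybar = y then 0 else a) * ℓ ybar = a * (∑ ybar, ℓ ybar - ℓ y) := by
  simp only [ite_mul, zero_mul, sum_ite, sum_const_zero, zero_add, ← ne_eq, filter_ne',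
    sum_erase_eq_sub (mem_univ y), mul_sub, mul_sum]

theorem sum_complementary_mul (w ℓ : ι → R) (a : R) :
    ∑ ybar, (∑ y, w y * (if ybar = y then 0 else a)) * ℓ ybar
      = a * ∑ y, w y * (∑ ybar, ℓ ybar - ℓ y) := by
  simp_rw [sum_mul, mul_assoc]
  rw [sum_comm, mul_sum]
  refine sum_congr rfl fun y _ => ?_
  rw [← mul_sum, sum_ite_eq_zero_mul]
  ring

end ComplementaryLabels

theorem uniform_complementary_risk_identity_general
    {X : Type*} [Fintype X] (C : ℕ) (hC : 2 ≤ C)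
    (p : X → Fin C → ℝ)           -- joint pmf of (X, Y)
    (hp1 : ∑ x, ∑ y, p x y = 1)
    (L : X → Fin C → ℝ)           -- loss x ↦ L(g(x), ·) for a fixed predictor g
    (K : ℝ) (hL : ∀ x, ∑ y, L x y = K) :
    ∑ x, ∑ y, p x y * L x y
      = K - ((C : ℝ) - 1) *
          ∑ x, ∑ ybar, (∑ y, p x y * (if ybar = y then 0 else 1 / ((C : ℝ) - 1)))
            * L x ybar := by
  have hC1 : (C : ℝ) - 1 ≠ 0 := by
    have : (2 : ℝ) ≤ C := by exact_mod_cast hC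
    linarith
  have hgap : ∑ x, ∑ y, p x y * (K - L x y) = K - ∑ x, ∑ y, p x y * L x y := by
    simp_rw [mul_sub, sum_sub_distrib, ← sum_mul, hp1, one_mul]
  simp_rw [sum_complementary_mul, hL, ← mul_sum, hgap]
  field_simp
  ring

/-- Unbiased risk rewriting under the uniform complementary-label assumption:
if the loss satisfies the symmetric condition `∑_{y} L x y = K` for all `x`, then
the ordinary risk equals `K - (C-1)` times the complementary risk, where the
complementary label given `Y = y` is uniform on the `C-1` labels `≠ y`. -/
theorem uniform_complementary_risk_identity
    {X : Type*} [Fintype X] (C : ℕ) (hC : 2 ≤ C)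
    (p : X → Fin C → ℝ)           -- joint pmf of (X, Y)
    (hp0 : ∀ x y, 0 ≤ p x y) (hp1 : ∑ x, ∑ y, p x y = 1)
    (L : X → Fin C → ℝ)           -- loss x ↦ L(g(x), ·) for a fixed predictor g
    (K : ℝ) (hL : ∀ x, ∑ y, L x y = K) :
    ∑ x, ∑ y, p x y * L x y
      = K - ((C : ℝ) - 1) *
          ∑ x, ∑ ybar, (∑ y, p x y * (if ybar = y then 0 else 1 / ((C : ℝ) - 1)))
            * L x ybar :=
  uniform_complementary_risk_identity_general C hC p hp1 L K hL
end
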